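/- Let R be a semiprime ring and L a Lie ideal of R that is not abelian (i.e., [L, L] ≠ 0). Then for every integer m > 1, L^m contains a nonzero (two-sided) ideal of R; precisely, the ideal generated by [L^{m-1}, L^m] is nonzero and contained in L^m. -/

import Mathlib

/-- The additive subgroup generated by commutators `a*b - b*a` with `a ∈ A`, `b ∈ B`. -/
def commSG (R : Type*) [NonUnitalRing R] (A B : Set R) : AddSubgroup R :=
  AddSubgroup.closure {x | ∃ a ∈ A, ∃ b ∈ B, x = a * b - b * a}

/-- The additive subgroup generated by products `a*b` with `a ∈ A`, `b ∈ B`. -/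
def prodSG (R : Type*) [NonUnitalRing R] (A B : Set R) : AddSubgroup R :=
  AddSubgroup.closure {x | ∃ a ∈ A, ∃ b ∈ B, x = a * b}

/-- `L` is a Lie ideal of `R`. -/
def IsLieIdeal (R : Type*) [NonUnitalRing R] (L : AddSubgroup R) : Prop :=
  ∀ a ∈ L, ∀ r : R, a * r - r * a ∈ L

/-- `sgPow R L n` is the additive subgroup `L^(n+1)` generated by products of `n+1`
elements of `L`. -/
def sgPow (R : Type*) [NonUnitalRing R] (L : AddSubgroup R) : ℕ → AddSubgroup R
  | 0 => L
  | n + 1 => prodSG R (sgPow R L n) L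

/-- `R` is a semiprime ring. -/
def IsSemiprimeRing (R : Type*) [NonUnitalRing R] : Prop :=
  ∀ a : R, (∀ x : R, a * x * a = 0) → a = 0

/-- `R` is a prime ring. -/
def IsPrimeRing (R : Type*) [NonUnitalRing R] : Prop :=
  ∀ a b : R, (∀ x : R, a * x * b = 0) → a = 0 ∨ b = 0


/-!
Write `A = L^(m-1)` and `B = L^m`. Every power of `L` is a Lie ideal and `[L^k, R] ⊆ L`, which
gives `[A, B] R ⊆ B`; as `B` is a Lie ideal, also `R [A, B] ⊆ B` and `R [A, B] R ⊆ B`, so the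
ideal generated by `[A, B]` lies in `B`.

In a semiprime ring no nonzero element `w` of a Lie ideal `M` satisfies `w M = 0`, because
`w r w = w w r - w [w, r]`. If `[A, B] = 0`, this applied to `w = [x, v]` (`x ∈ L`, `v ∈ A`) and
`M = A ∩ B` gives `[L, A] = 0`; the same argument shows that `[L, L^(j+1)] = 0` forces
`[L, L^j] = 0`, and descending to `j = 1` contradicts `[L, L] ≠ 0`.
-/

section LieIdeal

variable {R : Type*} [NonUnitalRing R] {M : AddSubgroup R}

lemma IsLieIdeal.inf {N : AddSubgroup R} (hM : IsLieIdeal R M) (hN : IsLieIdeal R N) :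
    IsLieIdeal R (M ⊓ N) :=
  fun a ha r => ⟨hM a ha.1 r, hN a ha.2 r⟩

lemma IsLieIdeal.mul_sub_mul_mem (hM : IsLieIdeal R M) {a : R} (ha : a ∈ M) (r : R) :
    r * a - a * r ∈ M := by
  simpa only [neg_sub] using neg_mem (hM a ha r)

lemma IsLieIdeal.mul_mem_left (hM : IsLieIdeal R M) {x : R} (hx : x ∈ M)
    (hxR : ∀ s, x * s ∈ M) (r : R) : r * x ∈ M := by
  rw [show r * x = x * r - (x * r - r * x) by abel]
  exact sub_mem (hxR r) (hM x hx r)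

lemma IsLieIdeal.mul_mul_mem (hM : IsLieIdeal R M) {x : R} (hxR : ∀ s, x * s ∈ M)
    (r s : R) : r * x * s ∈ M := by
  rw [show r * x * s = x * (s * r) - (x * s * r - r * (x * s)) by
    simp only [mul_assoc]; abel]
  exact sub_mem (hxR _) (hM _ (hxR s) r)

/-- The largest two-sided ideal of `R` contained in the Lie ideal `M`. -/
def IsLieIdeal.coreIdeal (hM : IsLieIdeal R M) : TwoSidedIdeal R :=
  .mk' {x | x ∈ M ∧ ∀ s, x * s ∈ M}
    ⟨zero_mem M, fun s => by simp⟩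
    (fun ⟨hx, hxR⟩ ⟨hy, hyR⟩ => ⟨add_mem hx hy, fun s => by
      simpa only [add_mul] using add_mem (hxR s) (hyR s)⟩)
    (fun ⟨hx, hxR⟩ => ⟨neg_mem hx, fun s => by simpa only [neg_mul] using neg_mem (hxR s)⟩)
    (fun {r _} ⟨hx, hxR⟩ => ⟨hM.mul_mem_left hx hxR r, hM.mul_mul_mem hxR r⟩)
    (fun {_ r} ⟨_, hxR⟩ => ⟨hxR r, fun s => by simpa only [mul_assoc] using hxR (r * s)⟩)

lemma IsLieIdeal.mem_coreIdeal (hM : IsLieIdeal R M) {x : R} :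
    x ∈ hM.coreIdeal ↔ x ∈ M ∧ ∀ s, x * s ∈ M :=
  TwoSidedIdeal.mem_mk' ..

lemma IsLieIdeal.span_closure_subset (hM : IsLieIdeal R M) {T : Set R}
    (hT : ∀ x ∈ T, x ∈ M ∧ ∀ s, x * s ∈ M) :
    (TwoSidedIdeal.span (AddSubgroup.closure T : Set R) : Set R) ⊆ M := by
  have hcore : TwoSidedIdeal.span (AddSubgroup.closure T : Set R) ≤ hM.coreIdeal :=
    TwoSidedIdeal.span_le.mpr fun _ hx =>
      AddSubgroup.closure_induction (fun y hy => hM.mem_coreIdeal.mpr (hT y hy)) (zero_mem _)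
        (fun _ _ _ _ => add_mem) (fun _ _ => neg_mem) hx
  exact fun x hx => (hM.mem_coreIdeal.mp (hcore hx)).1

lemma IsSemiprimeRing.eq_zero_of_mul_eq_zero (hR : IsSemiprimeRing R) (hM : IsLieIdeal R M)
    {w : R} (hw : w ∈ M) (hwM : ∀ c ∈ M, w * c = 0) : w = 0 :=
  hR w fun r => by
    rw [show w * r * w = w * w * r - w * (w * r - r * w) by simp only [mul_sub, mul_assoc]; abel,
      hwM w hw, hwM _ (hM w hw r), zero_mul, sub_zero]

lemma IsSemiprimeRing.commute_of_commute_lieIdeals (hR : IsSemiprimeRing R) {P Q : AddSubgroup R}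
    (hP : IsLieIdeal R P) (hQ : IsLieIdeal R Q) (hPQ : ∀ v ∈ P, ∀ c ∈ Q, Commute v c)
    {y v : R} (hv : v ∈ P) (hyvQ : y * v - v * y ∈ Q) (hy : ∀ c ∈ P ⊓ Q, y * c ∈ Q) :
    Commute y v := by
  refine sub_eq_zero.mp <| hR.eq_zero_of_mul_eq_zero (hP.inf hQ) ⟨hP.mul_sub_mul_mem hv y, hyvQ⟩
    fun c hc => ?_
  calc (y * v - v * y) * c = y * c * v - v * (y * c) := by
        rw [sub_mul, mul_assoc y, (hPQ v hv c hc.2).eq, ← mul_assoc y, mul_assoc v]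
    _ = 0 := by rw [(hPQ v hv _ (hy c hc)).eq, sub_self]

end LieIdeal

section sgPow

variable {R : Type*} [NonUnitalRing R] {L : AddSubgroup R}

lemma mul_mem_sgPow_succ {n : ℕ} {a l : R} (ha : a ∈ sgPow R L n) (hl : l ∈ L) :
    a * l ∈ sgPow R L (n + 1) :=
  AddSubgroup.subset_closure ⟨a, ha, l, hl, rfl⟩

lemma map_mem_of_mem_sgPow_succ {n : ℕ} {M : AddSubgroup R} (f : R →+ R)
    (hf : ∀ a ∈ sgPow R L n, ∀ l ∈ L, f (a * l) ∈ M) {v : R}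
    (hv : v ∈ sgPow R L (n + 1)) : f v ∈ M :=
  (AddSubgroup.closure_le (K := M.comap f)).mpr
    (by rintro _ ⟨a, ha, l, hl, rfl⟩; exact hf a ha l hl) hv

lemma mul_mem_sgPow {i j : ℕ} {x y : R} (hx : x ∈ sgPow R L i) (hy : y ∈ sgPow R L j) :
    x * y ∈ sgPow R L (i + j + 1) := by
  induction j generalizing y with
  | zero => exact mul_mem_sgPow_succ hx hy
  | succ j ih =>
    refine map_mem_of_mem_sgPow_succ (.mulLeft x) (fun a ha l hl => ?_) hy
    rw [AddMonoidHom.coe_mulLeft, ← mul_assoc]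
    exact mul_mem_sgPow_succ (ih ha) hl

lemma isLieIdeal_sgPow (hL : IsLieIdeal R L) (n : ℕ) : IsLieIdeal R (sgPow R L n) := by
  induction n with
  | zero => exact hL
  | succ n ih =>
    intro v hv r
    refine map_mem_of_mem_sgPow_succ (.mulRight r - .mulLeft r) (fun a ha l hl => ?_) hv
    rw [AddMonoidHom.sub_apply, AddMonoidHom.mulRight_apply, AddMonoidHom.coe_mulLeft,
      show a * l * r - r * (a * l) = a * (l * r - r * l) + (a * r - r * a) * l by
        simp only [mul_sub, sub_mul, mul_assoc]; abel]
    exact add_mem (mul_mem_sgPow_succ ha (hL l hl r)) (mul_mem_sgPow_succ (ih a ha r) hl)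

lemma commutator_mem_of_mem_sgPow (hL : IsLieIdeal R L) {k : ℕ} {w : R}
    (hw : w ∈ sgPow R L k) (x : R) : w * x - x * w ∈ L := by
  induction k generalizing w x with
  | zero => exact hL w hw x
  | succ k ih =>
    refine map_mem_of_mem_sgPow_succ (.mulRight x - .mulLeft x) (fun a ha l hl => ?_) hw
    rw [AddMonoidHom.sub_apply, AddMonoidHom.mulRight_apply, AddMonoidHom.coe_mulLeft,
      show a * l * x - x * (a * l) = (a * (l * x) - l * x * a) + (l * (x * a) - x * a * l) by
        simp only [mul_assoc]; abel]
    exact add_mem (ih ha _) (hL l hl _)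

lemma mul_mem_sgPow_succ' {n : ℕ} {l a : R} (hl : l ∈ L) (ha : a ∈ sgPow R L n) :
    l * a ∈ sgPow R L (n + 1) := by
  simpa only [zero_add] using mul_mem_sgPow (i := 0) hl ha

lemma commutator_mul_mem_sgPow_succ (hL : IsLieIdeal R L) {n : ℕ} {u v : R}
    (hu : u ∈ sgPow R L n) (hv : v ∈ sgPow R L (n + 1)) (s : R) :
    (u * v - v * u) * s ∈ sgPow R L (n + 1) := by
  refine map_mem_of_mem_sgPow_succ ((AddMonoidHom.mulRight s).comp (.mulLeft u - .mulRight u))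
    (fun a ha l hl => ?_) hv
  simp only [AddMonoidHom.comp_apply, AddMonoidHom.sub_apply, AddMonoidHom.mulRight_apply,
    AddMonoidHom.coe_mulLeft]
  rw [show (u * (a * l) - a * l * u) * s =
      u * (a * (l * s) - l * s * a) + u * (l * (s * a) - s * a * l)
        - (a * (l * (u * s) - u * s * l) + (a * (u * s) - u * s * a) * l) by
    simp only [mul_sub, sub_mul, mul_assoc]; abel]
  refine sub_mem (add_mem ?_ ?_) (add_mem ?_ ?_)
  · exact mul_mem_sgPow_succ hu (commutator_mem_of_mem_sgPow hL ha _)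
  · exact mul_mem_sgPow_succ hu (hL l hl _)
  · exact mul_mem_sgPow_succ ha (hL l hl _)
  · exact mul_mem_sgPow_succ (isLieIdeal_sgPow hL n a ha _) hl

lemma span_commSG_subset (hL : IsLieIdeal R L) (n : ℕ) :
    (TwoSidedIdeal.span (commSG R (sgPow R L n) (sgPow R L (n + 1)) : Set R) : Set R)
      ⊆ sgPow R L (n + 1) :=
  (isLieIdeal_sgPow hL (n + 1)).span_closure_subset fun _ ⟨_, hu, _, hv, hx⟩ => hx ▸
    ⟨(isLieIdeal_sgPow hL (n + 1)).mul_sub_mul_mem hv _, commutator_mul_mem_sgPow_succ hL hu hv⟩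

lemma commute_of_forall_commute_sgPow_sgPow_succ (hR : IsSemiprimeRing R) (hL : IsLieIdeal R L)
    {n : ℕ} (h : ∀ u ∈ sgPow R L n, ∀ v ∈ sgPow R L (n + 1), Commute u v) {x v : R}
    (hx : x ∈ L) (hv : v ∈ sgPow R L n) : Commute x v :=
  hR.commute_of_commute_lieIdeals (isLieIdeal_sgPow hL n) (isLieIdeal_sgPow hL (n + 1)) h hv
    (sub_mem (mul_mem_sgPow_succ' hx hv) (mul_mem_sgPow_succ hv hx))
    fun _ hc => mul_mem_sgPow_succ' hx hc.1

lemma commute_of_forall_commute_sgPow_succ (hR : IsSemiprimeRing R) (hL : IsLieIdeal R L)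
    {j : ℕ} (h : ∀ x ∈ L, ∀ γ ∈ sgPow R L (j + 1), Commute x γ) {x δ : R}
    (hx : x ∈ L) (hδ : δ ∈ sgPow R L j) : Commute x δ :=
  (hR.commute_of_commute_lieIdeals hL (isLieIdeal_sgPow hL (j + 1)) h hx
    (sub_mem (mul_mem_sgPow_succ hδ hx) (mul_mem_sgPow_succ' hx hδ))
    fun _ hc => mul_mem_sgPow_succ hδ hc.1).symm

lemma commute_of_forall_commute_sgPow (hR : IsSemiprimeRing R) (hL : IsLieIdeal R L)
    {j : ℕ} (h : ∀ x ∈ L, ∀ γ ∈ sgPow R L j, Commute x γ)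
    {a b : R} (ha : a ∈ L) (hb : b ∈ L) : Commute a b := by
  induction j with
  | zero => exact h a ha b hb
  | succ j ih => exact ih fun x hx δ hδ => commute_of_forall_commute_sgPow_succ hR hL h hx hδ

lemma span_commSG_ne_bot (hR : IsSemiprimeRing R) (hL : IsLieIdeal R L)
    (hLL : ∃ a ∈ L, ∃ b ∈ L, a * b ≠ b * a) (n : ℕ) :
    TwoSidedIdeal.span (commSG R (sgPow R L n) (sgPow R L (n + 1)) : Set R) ≠ ⊥ := by
  obtain ⟨a, ha, b, hb, hab⟩ := hLL
  intro hbot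
  have hcomm : ∀ u ∈ sgPow R L n, ∀ v ∈ sgPow R L (n + 1), Commute u v := fun u hu v hv =>
    sub_eq_zero.mp <| (TwoSidedIdeal.mem_bot R).mp <|
      hbot ▸ TwoSidedIdeal.subset_span (AddSubgroup.subset_closure ⟨u, hu, v, hv, rfl⟩)
  exact hab <| commute_of_forall_commute_sgPow hR hL
    (fun _ hx _ hv => commute_of_forall_commute_sgPow_sgPow_succ hR hL hcomm hx hv) ha hb

end sgPow

/-- semiprime ring, non-abelian Lie ideal L, m > 1: the ideal generated by
[L^{m-1}, L^m] is nonzero and contained in L^m. -/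
theorem stmt11 (R : Type*) [NonUnitalRing R] (hR : IsSemiprimeRing R)
    (L : AddSubgroup R) (hL : IsLieIdeal R L)
    (hab : ∃ a ∈ L, ∃ b ∈ L, a * b ≠ b * a) (m : ℕ) (hm : 1 < m) :
    TwoSidedIdeal.span
        ((commSG R ((sgPow R L (m - 2) : AddSubgroup R) : Set R)
            ((sgPow R L (m - 1) : AddSubgroup R) : Set R) : AddSubgroup R) : Set R) ≠ ⊥ ∧
    (TwoSidedIdeal.span
        ((commSG R ((sgPow R L (m - 2) : AddSubgroup R) : Set R)
            ((sgPow R L (m - 1) : AddSubgroup R) : Set R) : AddSubgroup R) : Set R) : Set R)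
      ⊆ ((sgPow R L (m - 1) : AddSubgroup R) : Set R) := by
  obtain ⟨n, rfl⟩ : ∃ n, m = n + 2 := ⟨m - 2, by omega⟩
  rw [show n + 2 - 2 = n by omega, show n + 2 - 1 = n + 1 by omega]
  exact ⟨span_commSG_ne_bot hR hL hab n, span_commSG_subset hL n⟩
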